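/- arXiv:2104.09063 — 3 statements merged into one kernel-verified Lean document; each statement's English description precedes it below -/
import Mathlib

section
/- For any word w over Σ with ι(w) = k ≥ 1 and any s ∈ ℕ, we have s·k ≤ ι(w^s) ≤ s·k + s − 1. -/
open List

variable {α : Type*}

/-- `w` is `k`-universal: every word of length `k` over the alphabet `α`
is a scattered factor (subsequence) of `w`. -/
def IsUniversal [Fintype α] (k : ℕ) (w : List α) : Prop :=
  ∀ u : List α, u.length = k → u.Sublist w

/-- The universality index `ι(w)`: the largest `k` such that `w` is `k`-universal. -/
noncomputable def univIndex [Fintype α] (w : List α) : ℕ :=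
  sSup {k | IsUniversal k w}

/-- The circular universality index `ζ(w)`: the largest `k` such that some
conjugate of `w` is `k`-universal. -/
noncomputable def circIndex [Fintype α] (w : List α) : ℕ :=
  sSup {k | ∃ u v : List α, w = u ++ v ∧ IsUniversal k (v ++ u)}

/-- `wpow w s = w^s`, the `s`-fold concatenation of `w`. -/
def wpow (w : List α) (s : ℕ) : List α := (List.replicate s w).flatten

/-- Auxiliary (fuelled) computation of the remainder of the arch factorisation:
greedily remove the shortest prefix containing every letter of the alphabet. -/
def remAux [Fintype α] [DecidableEq α] : ℕ → List α → List α
  | 0, w => w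
  | (n+1), w =>
    match (List.range' 1 w.length).find?
        (fun m => decide ((w.take m).toFinset = Finset.univ)) with
    | none => w
    | some m => remAux n (w.drop m)

/-- `rem w = r(w)`, the remainder of the arch factorisation of `w`. -/
def rem [Fintype α] [DecidableEq α] (w : List α) : List α := remAux w.length w

/-- Auxiliary (fuelled) computation of the list of arches of `w`. -/
def archesAux [Fintype α] [DecidableEq α] : ℕ → List α → List (List α)
  | 0, _ => []
  | (n+1), w =>
    match (List.range' 1 w.length).find?
        (fun m => decide ((w.take m).toFinset = Finset.univ)) with
    | none => []
    | some m => (w.take m) :: archesAux n (w.drop m)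

/-- `arches w`: the list `[arch₁(w), …, arch_{ι(w)}(w)]` of arches of `w`. -/
def arches [Fintype α] [DecidableEq α] (w : List α) : List (List α) :=
  archesAux w.length w

/-! Concatenation is superadditive for universality, `ι(u) + ι(v) ≤ ι(uv)`, and subadditive up
to one, `ι(uv) ≤ ι(u) + ι(v) + 1`: if `u` misses a word `x` of length `ι(u) + 1`, then in an
embedding of `x ++ y` into `u ++ v` the prefix `x` cannot land inside `u`, so `y` embeds into `v`.
Iterating both inequalities along `w^(s+1) = w ++ w^s` gives the two bounds. -/

theorem List.sublist_or_sublist_of_append_sublist_append {x y u v : List α}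
    (h : x ++ y <+ u ++ v) : x <+ u ∨ y <+ v := by
  obtain ⟨z₁, z₂, hz, h₁, h₂⟩ := sublist_append_iff.mp h
  rcases append_eq_append_iff.mp hz with ⟨t, rfl, rfl⟩ | ⟨t, rfl, rfl⟩
  · exact .inl ((sublist_append_left x t).trans h₁)
  · exact .inr ((sublist_append_right t y).trans h₂)

theorem wpow_succ (w : List α) (s : ℕ) : wpow w (s + 1) = w ++ wpow w s := by
  simp [wpow, replicate_succ]

section
variable [Fintype α] {p q : ℕ} {u v : List α}

theorem isUniversal_zero (w : List α) : IsUniversal 0 w := fun u hu => by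
  simp [length_eq_zero_iff.mp hu]

theorem IsUniversal.append (hu : IsUniversal p u) (hv : IsUniversal q v) :
    IsUniversal (p + q) (u ++ v) := fun z hz => by
  simpa only [take_append_drop] using
    (hu (z.take p) (by simp [hz])).append (hv (z.drop p) (by simp [hz]))

theorem IsUniversal.of_append_of_not_isUniversal (h : IsUniversal (p + 1 + q) (u ++ v))
    (hu : ¬IsUniversal (p + 1) u) : IsUniversal q v := by
  obtain ⟨x, hx, hxu⟩ : ∃ x : List α, x.length = p + 1 ∧ ¬x <+ u := by
    simpa [IsUniversal] using hu
  intro y hy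
  exact (sublist_or_sublist_of_append_sublist_append (h (x ++ y) (by simp [hx, hy]))).resolve_left
    hxu

/-- Over the empty alphabet every `k` qualifies, and `sSup` of an unbounded set of naturals is
the junk value `0`. -/
theorem univIndex_of_isEmpty [IsEmpty α] (w : List α) : univIndex w = 0 := by
  have hall : ∀ k, IsUniversal k w := fun k u _ => by
    rw [Subsingleton.elim u []]
    exact nil_sublist w
  have hunb : ¬BddAbove {k | IsUniversal k w} := fun ⟨b, hb⟩ =>
    b.not_succ_le_self (hb (hall (b + 1)))
  rw [univIndex, csSup_of_not_bddAbove hunb, csSup_empty, bot_eq_zero]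

section
variable [Nonempty α] {m n : ℕ} {w : List α}

theorem IsUniversal.mono (h : IsUniversal n w) (hmn : m ≤ n) : IsUniversal m w := by
  obtain ⟨a⟩ := ‹Nonempty α›
  intro z hz
  exact (sublist_append_left z _).trans (h (z ++ replicate (n - m) a) (by simp [hz]; omega))

theorem IsUniversal.le_length (h : IsUniversal m w) : m ≤ w.length := by
  obtain ⟨a⟩ := ‹Nonempty α›
  simpa using (h (replicate m a) length_replicate).length_le

theorem isUniversal_iff_le_univIndex : IsUniversal m w ↔ m ≤ univIndex w := by
  have hbdd : BddAbove {k | IsUniversal k w} := ⟨w.length, fun _ h => h.le_length⟩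
  refine ⟨fun h => le_csSup hbdd h, fun h => IsUniversal.mono ?_ h⟩
  exact Nat.sSup_mem ⟨0, isUniversal_zero w⟩ hbdd

theorem univIndex_le_length : univIndex w ≤ w.length :=
  (isUniversal_iff_le_univIndex.mpr le_rfl).le_length

theorem univIndex_add_univIndex_le : univIndex u + univIndex v ≤ univIndex (u ++ v) :=
  isUniversal_iff_le_univIndex.mp <|
    (isUniversal_iff_le_univIndex.mpr le_rfl).append (isUniversal_iff_le_univIndex.mpr le_rfl)

theorem univIndex_append_le : univIndex (u ++ v) ≤ univIndex u + univIndex v + 1 := by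
  by_contra! hlt
  have h : IsUniversal (univIndex u + 1 + (univIndex v + 1)) (u ++ v) :=
    isUniversal_iff_le_univIndex.mpr (by omega)
  have hv := h.of_append_of_not_isUniversal (by simp [isUniversal_iff_le_univIndex])
  simp [isUniversal_iff_le_univIndex] at hv

theorem mul_univIndex_le_univIndex_wpow (w : List α) (s : ℕ) :
    s * univIndex w ≤ univIndex (wpow w s) := by
  induction s with
  | zero => simp
  | succ s ih =>
    rw [wpow_succ, add_one_mul]
    have := univIndex_add_univIndex_le (u := w) (v := wpow w s)
    omega

theorem univIndex_wpow_succ_le (w : List α) (s : ℕ) :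
    univIndex (wpow w (s + 1)) ≤ (s + 1) * univIndex w + s := by
  induction s with
  | zero => simp [wpow]
  | succ s ih =>
    rw [wpow_succ, add_one_mul]
    have := univIndex_append_le (u := w) (v := wpow w (s + 1))
    omega

end
end

theorem univIndex_pow_bounds_general [Fintype α] (w : List α) (k : ℕ)
    (hk : univIndex w = k) (s : ℕ) :
    s * k ≤ univIndex (wpow w s) ∧ univIndex (wpow w s) ≤ s * k + s - 1 := by
  subst hk
  cases isEmpty_or_nonempty α
  · simp [univIndex_of_isEmpty]
  refine ⟨mul_univIndex_le_univIndex_wpow w s, ?_⟩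
  rcases s with _ | s
  · simpa [wpow] using univIndex_le_length (w := ([] : List α))
  · have := univIndex_wpow_succ_le w s
    omega

theorem univIndex_pow_bounds [Fintype α] (w : List α) (k : ℕ)
    (hk : univIndex w = k) (hk1 : 1 ≤ k) (s : ℕ) (hs : 1 ≤ s) :
    s * k ≤ univIndex (wpow w s) ∧ univIndex (wpow w s) ≤ s * k + s - 1 :=
  univIndex_pow_bounds_general w k hk s
end

section
/- For any word w over Σ with ι(w) = k ≥ 1, the word p = r(w^R)^R (the reversal of the remainder of the arch factorization of the reversal of w) is the longest prefix p of w such that ι(p^{-1} w) = k, where p^{-1} w denotes w with prefix p removed. -/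
open List

variable {α : Type*}

/-!
Since arches are chosen greedily, a `j`-universal prefix of a word is at least as long as its
first `j` arches. Read backwards, the `k` arches of `wᴿ` thus form the shortest `k`-universal
suffix of `w`, so removing a prefix longer than `r(wᴿ)ᴿ` leaves a suffix that is not
`k`-universal; removing exactly `r(wᴿ)ᴿ` leaves those arches, which are `k`-universal and, being
a factor of `w`, no more.
-/

section Universality

variable [Fintype α]

theorem IsUniversal.of_sublist {k : ℕ} {u v : List α} (h : IsUniversal k u) (huv : u <+ v) :
    IsUniversal k v :=
  fun s hs => (h s hs).trans huv

theorem IsUniversal.of_le [Nonempty α] {j k : ℕ} {w : List α} (h : IsUniversal k w)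
    (hjk : j ≤ k) : IsUniversal j w := by
  intro u hu
  obtain ⟨a⟩ := ‹Nonempty α›
  exact (sublist_append_left u _).trans (h (u ++ replicate (k - j) a) (by simp [hu]; omega))

theorem IsUniversal.reverse {k : ℕ} {w : List α} (h : IsUniversal k w) :
    IsUniversal k w.reverse :=
  fun u hu => by simpa using (h u.reverse (by simp [hu])).reverse

theorem isUniversal_reverse_iff {k : ℕ} {w : List α} :
    IsUniversal k w.reverse ↔ IsUniversal k w :=
  ⟨fun h => by simpa using h.reverse, IsUniversal.reverse⟩

theorem univIndex_reverse (w : List α) : univIndex w.reverse = univIndex w := by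
  simp only [univIndex, isUniversal_reverse_iff]

variable [DecidableEq α]

theorem IsUniversal.toFinset_eq_univ {j : ℕ} {u : List α} (h : IsUniversal (j + 1) u) :
    u.toFinset = Finset.univ :=
  Finset.eq_univ_iff_forall.mpr fun x =>
    mem_toFinset.mpr ((h (replicate (j + 1) x) (by simp)).subset (by simp))

theorem isUniversal_flatten {L : List (List α)} (hL : ∀ b ∈ L, b.toFinset = Finset.univ) :
    IsUniversal L.length L.flatten := by
  induction L with
  | nil => intro u hu; simp_all
  | cons b L ih =>
    rintro (_ | ⟨x, u⟩) hu
    · simp at hu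
    have hx : [x] <+ b := singleton_sublist.mpr <| mem_toFinset.mp <| by
      simp [hL b mem_cons_self]
    exact hx.append (ih (fun c hc => hL c (mem_cons_of_mem b hc)) u (by simpa using hu))

/-- A letter missing from the first `m` letters occurs at position `m` at the earliest, and every
word of length `j` can be read after that first occurrence. -/
theorem IsUniversal.drop_succ_of_toFinset_take_ne_univ {j m : ℕ} {u : List α}
    (h : IsUniversal (j + 1) u) (hm : (u.take m).toFinset ≠ Finset.univ) :
    IsUniversal j (u.drop (m + 1)) := by
  obtain ⟨x, hx⟩ : ∃ x, x ∉ u.take m := by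
    simpa [Finset.eq_univ_iff_forall] using hm
  intro s hs
  have hxs : x :: s <+ u.take m ++ u.drop m := by
    simpa using h (x :: s) (by simp [hs])
  obtain ⟨l₁, l₂, hl, h₁, h₂⟩ := sublist_append_iff.mp hxs
  rcases l₁ with _ | ⟨y, l₁⟩
  · simpa [← tail_drop] using (show x :: s <+ u.drop m by simpa [hl] using h₂).tail
  · obtain ⟨rfl, -⟩ : x = y ∧ s = l₁ ++ l₂ := by simpa using hl
    exact absurd (h₁.subset mem_cons_self) hx

end Universality

section Arches

variable [Fintype α] [DecidableEq α]

def firstArchLen (v : List α) : Option ℕ :=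
  (List.range' 1 v.length).find? fun m => decide ((v.take m).toFinset = Finset.univ)

theorem archesAux_succ_of_firstArchLen_eq_none {n : ℕ} {v : List α}
    (h : firstArchLen v = none) : archesAux (n + 1) v = [] := by
  unfold firstArchLen at h
  simp only [archesAux, h]

theorem archesAux_succ_of_firstArchLen_eq_some {n m : ℕ} {v : List α}
    (h : firstArchLen v = some m) :
    archesAux (n + 1) v = v.take m :: archesAux n (v.drop m) := by
  unfold firstArchLen at h
  simp only [archesAux, h]

theorem remAux_succ_of_firstArchLen_eq_none {n : ℕ} {v : List α}
    (h : firstArchLen v = none) : remAux (n + 1) v = v := by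
  unfold firstArchLen at h
  simp only [remAux, h]

theorem remAux_succ_of_firstArchLen_eq_some {n m : ℕ} {v : List α}
    (h : firstArchLen v = some m) :
    remAux (n + 1) v = remAux n (v.drop m) := by
  unfold firstArchLen at h
  simp only [remAux, h]

theorem toFinset_take_eq_univ_of_firstArchLen_eq_some {m : ℕ} {v : List α}
    (h : firstArchLen v = some m) : (v.take m).toFinset = Finset.univ := by
  unfold firstArchLen at h
  simpa using (find?_range'_eq_some.mp h).1

theorem exists_firstArchLen_eq_some [Nonempty α] {v : List α} (hv : v.toFinset = Finset.univ) :
    ∃ m, firstArchLen v = some m ∧ 0 < m ∧ m ≤ v.length ∧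
      ∀ j < m, (v.take j).toFinset ≠ Finset.univ := by
  have hv₀ : 0 < v.length := length_pos_iff.mpr fun h => by
    simp [h, Finset.univ_nonempty.ne_empty.symm] at hv
  cases h : firstArchLen v with
  | none =>
    unfold firstArchLen at h
    simpa [hv] using find?_range'_eq_none.mp h v.length (by omega)
  | some m =>
    unfold firstArchLen at h
    obtain ⟨-, hm, hmin⟩ := find?_range'_eq_some.mp h
    rw [mem_range'_1] at hm
    refine ⟨m, rfl, by omega, by omega, fun j hj => ?_⟩
    rcases Nat.eq_zero_or_pos j with rfl | hj₀
    · simp [Finset.univ_nonempty.ne_empty.symm]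
    · simpa using hmin j hj₀ hj

theorem archesAux_flatten_append_remAux (n : ℕ) (v : List α) :
    (archesAux n v).flatten ++ remAux n v = v := by
  induction n generalizing v with
  | zero => rfl
  | succ n ih =>
    cases h : firstArchLen v with
    | none =>
      simp [archesAux_succ_of_firstArchLen_eq_none h, remAux_succ_of_firstArchLen_eq_none h]
    | some m =>
      simp [archesAux_succ_of_firstArchLen_eq_some h, remAux_succ_of_firstArchLen_eq_some h, ih]

theorem toFinset_eq_univ_of_mem_archesAux {n : ℕ} {v b : List α} (hb : b ∈ archesAux n v) :
    b.toFinset = Finset.univ := by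
  induction n generalizing v with
  | zero => simp [archesAux] at hb
  | succ n ih =>
    cases h : firstArchLen v with
    | none => simp [archesAux_succ_of_firstArchLen_eq_none h] at hb
    | some m =>
      rw [archesAux_succ_of_firstArchLen_eq_some h, mem_cons] at hb
      rcases hb with rfl | hb
      · exact toFinset_take_eq_univ_of_firstArchLen_eq_some h
      · exact ih hb

theorem IsUniversal.le_length_archesAux_and_length_flatten_take_le [Nonempty α] {n j : ℕ}
    {u v : List α} (hj : IsUniversal j u) (huv : u <+: v) (hn : v.length ≤ n) :
    j ≤ (archesAux n v).length ∧ ((archesAux n v).take j).flatten.length ≤ u.length := by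
  induction j generalizing n u v with
  | zero => simp
  | succ j ih =>
    obtain ⟨t, rfl⟩ := huv
    have hu := hj.toFinset_eq_univ
    obtain ⟨m, hm, hm₀, hmv, hmin⟩ := exists_firstArchLen_eq_some (v := u ++ t) (by simp [hu])
    have hmu : m ≤ u.length := by
      by_contra! hum
      exact hmin u.length hum (by rwa [take_left])
    have hrest : IsUniversal j (u.drop m) := by
      have := hj.drop_succ_of_toFinset_take_ne_univ (m := m - 1) (by
        rw [← take_append_of_le_length (l₂ := t) (by omega)]; exact hmin _ (by omega))
      rwa [Nat.sub_add_cancel hm₀] at this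
    obtain ⟨n, rfl⟩ : ∃ n', n = n' + 1 := ⟨n - 1, by omega⟩
    obtain ⟨hlen, hflat⟩ := ih (n := n) hrest ⟨t, (drop_append_of_le_length hmu).symm⟩
      (by simp only [length_drop, length_append] at hn ⊢; omega)
    rw [archesAux_succ_of_firstArchLen_eq_some hm, take_succ_cons, flatten_cons, length_append,
      length_take_of_le hmv, length_cons]
    simp only [length_drop] at hflat
    omega

end Arches

section UnivIndex

variable [Fintype α] [DecidableEq α]

theorem arches_flatten_append_rem (v : List α) : (arches v).flatten ++ rem v = v :=
  archesAux_flatten_append_remAux _ _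

theorem isUniversal_flatten_arches (v : List α) :
    IsUniversal (arches v).length (arches v).flatten :=
  isUniversal_flatten fun _ => toFinset_eq_univ_of_mem_archesAux

theorem IsUniversal.length_flatten_arches_le [Nonempty α] {u v : List α}
    (h : IsUniversal (arches v).length u) (huv : u <+: v) :
    (arches v).flatten.length ≤ u.length := by
  simpa only [arches, take_length] using
    (h.le_length_archesAux_and_length_flatten_take_le huv le_rfl).2

theorem isUniversal_iff_le_length_arches [Nonempty α] {j : ℕ} {v : List α} :
    IsUniversal j v ↔ j ≤ (arches v).length := by
  refine ⟨fun h => (h.le_length_archesAux_and_length_flatten_take_le (prefix_refl v) le_rfl).1,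
    fun h => ((isUniversal_flatten_arches v).of_sublist ?_).of_le h⟩
  conv_rhs => rw [← arches_flatten_append_rem v]
  exact sublist_append_left _ _

theorem univIndex_eq_length_arches [Nonempty α] (v : List α) :
    univIndex v = (arches v).length := by
  simp only [univIndex, isUniversal_iff_le_length_arches]
  exact csSup_Iic

theorem isUniversal_iff_le_univIndex_s5 [Nonempty α] {j : ℕ} {v : List α} :
    IsUniversal j v ↔ j ≤ univIndex v := by
  rw [isUniversal_iff_le_length_arches, univIndex_eq_length_arches]

theorem univIndex_le_of_sublist [Nonempty α] {u v : List α} (h : u <+ v) :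
    univIndex u ≤ univIndex v :=
  isUniversal_iff_le_univIndex_s5.mp ((isUniversal_iff_le_univIndex_s5.mpr le_rfl).of_sublist h)

end UnivIndex

theorem longest_removable_prefix_general [Fintype α] [DecidableEq α] (w : List α) (k : ℕ)
    (hk : univIndex w = k) :
    (rem w.reverse).reverse <+: w ∧
      univIndex (w.drop (rem w.reverse).length) = k ∧
      ∀ p : List α, p <+: w → univIndex (w.drop p.length) = k →
        p.length ≤ (rem w.reverse).length := by
  obtain hα | hα := isEmpty_or_nonempty α
  · obtain rfl : w = [] := eq_nil_iff_forall_not_mem.mpr isEmptyElim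
    exact ⟨nil_prefix, hk, fun p hp _ => by simp [prefix_nil.mp hp]⟩
  set A := arches w.reverse
  set r := rem w.reverse
  have hw : w = r.reverse ++ A.flatten.reverse := by
    simpa using (congrArg reverse (arches_flatten_append_rem w.reverse)).symm
  have hA : A.length = k := by rw [← univIndex_eq_length_arches, univIndex_reverse, hk]
  have hdrop : w.drop r.length = A.flatten.reverse := by
    rw [hw]
    simp
  refine ⟨⟨_, hw.symm⟩, ?_, fun p hp hpk => ?_⟩
  · rw [hdrop]
    apply le_antisymm
    · exact hk ▸ univIndex_le_of_sublist (hw ▸ sublist_append_right _ _)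
    · exact hA ▸ isUniversal_iff_le_univIndex_s5.mp
        (isUniversal_reverse_iff.mpr (isUniversal_flatten_arches _))
  · have hs : IsUniversal A.length (w.drop p.length).reverse := by
      rw [hA, isUniversal_reverse_iff, isUniversal_iff_le_univIndex_s5, hpk]
    have hAs : A.flatten.length ≤ (w.drop p.length).length := by
      simpa using hs.length_flatten_arches_le (reverse_prefix.mpr (drop_suffix _ _))
    have hlen := congrArg length hw
    simp only [length_append, length_reverse, length_drop] at hlen hAs
    have := hp.length_le
    omega

theorem longest_removable_prefix [Fintype α] [DecidableEq α] (w : List α) (k : ℕ)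
    (hk : univIndex w = k) (hk1 : 1 ≤ k) :
    (rem w.reverse).reverse <+: w ∧
      univIndex (w.drop (rem w.reverse).length) = k ∧
      ∀ p : List α, p <+: w → univIndex (w.drop p.length) = k →
        p.length ≤ (rem w.reverse).length :=
  longest_removable_prefix_general w k hk
end

section
/- Let u, v, w be words over Σ with alph(u) = alph(v) ⊊ Σ and ι(w) ≥ 1. Then r(uw) = r(vw), i.e. the remainder of the arch factorization of uw depends only on the set of letters of u. -/
open List

variable {α : Type*}

/-! Since `w` contains every letter while `u` misses one, the first arch of `u ++ w` ends inside
`w`, at the least `p` for which `w.take p` supplies the letters missing from `u`. Hence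
`r(u ++ w) = r(w.drop p)`, and `p` depends on `u` only through its set of letters. -/

section ArchFactorisation

variable [Fintype α] [DecidableEq α]

lemma remAux_nil (n : ℕ) : remAux (α := α) n [] = [] := by
  cases n <;> rfl

lemma remAux_eq_of_length_le :
    ∀ (n m : ℕ) (w : List α), w.length ≤ n → w.length ≤ m → remAux n w = remAux m w
  | 0, _, w, hn, _ | _, 0, w, _, hn => by
    rw [List.eq_nil_of_length_eq_zero (Nat.le_zero.mp hn), remAux_nil, remAux_nil]
  | n + 1, m + 1, w, hn, hm => by
    simp only [remAux]
    split
    next => rfl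
    next k hk =>
      have hk_pos := (List.mem_range'_1.mp (List.mem_of_find?_eq_some hk)).1
      exact remAux_eq_of_length_le n m _ (by simp; omega) (by simp; omega)

lemma rem_eq_rem_drop_of_find? {w : List α} {m : ℕ}
    (h : (List.range' 1 w.length).find?
      (fun m => decide ((w.take m).toFinset = Finset.univ)) = some m) :
    rem w = rem (w.drop m) := by
  have hm := List.mem_range'_1.mp (List.mem_of_find?_eq_some h)
  obtain ⟨n, hn⟩ : ∃ n, w.length = n + 1 := ⟨w.length - 1, by omega⟩
  rw [rem, hn, remAux, h]
  exact remAux_eq_of_length_le _ _ _ (by simp; omega) le_rfl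

lemma rem_append_eq_rem_drop {u w : List α} {p : ℕ} (hu : u.toFinset ≠ Finset.univ)
    (hp : IsLeast {k | u.toFinset ∪ (w.take k).toFinset = Finset.univ} p) :
    rem (u ++ w) = rem (w.drop p) := by
  obtain ⟨hp_univ, hp_min⟩ := hp
  have hp_pos : 0 < p := Nat.pos_of_ne_zero fun h => hu (by simpa [h] using hp_univ)
  have hp_le : p ≤ w.length := by
    by_contra! h
    have := hp_min (show w.length ∈ _ by simpa [List.take_of_length_le h.le] using hp_univ)
    omega
  -- the first arch of `u ++ w` is `u ++ w.take p`
  rw [rem_eq_rem_drop_of_find? (m := u.length + p), List.drop_length_add_append]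
  rw [List.find?_range'_eq_some]
  refine ⟨?_, ?_, fun j _ hj => ?_⟩
  · simpa [List.take_length_add_append, List.toFinset_append] using hp_univ
  · simp only [List.mem_range'_1, List.length_append]
    omega
  simp only [Bool.not_eq_true', decide_eq_false_iff_not]
  rcases le_total j u.length with hj_u | hu_j
  · rw [List.take_append_of_le_length hj_u]
    refine fun h => hu (Finset.univ_subset_iff.mp (h ▸ fun a ha => ?_))
    exact List.mem_toFinset.mpr (List.take_subset j u (List.mem_toFinset.mp ha))
  · obtain ⟨k, rfl⟩ := Nat.exists_eq_add_of_le hu_j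
    rw [List.take_length_add_append, List.toFinset_append]
    exact fun h => absurd (hp_min h) (by omega)

end ArchFactorisation

lemma bddAbove_setOf_isUniversal [Fintype α] [Nonempty α] (w : List α) :
    BddAbove {k | IsUniversal k w} := by
  obtain ⟨a⟩ := ‹Nonempty α›
  exact ⟨w.length, fun k hk => by simpa using (hk (List.replicate k a) (by simp)).length_le⟩

lemma isUniversal_univIndex [Fintype α] [Nonempty α] (w : List α) :
    IsUniversal (univIndex w) w :=
  Nat.sSup_mem ⟨0, fun u hu => by simp [List.eq_nil_of_length_eq_zero hu]⟩
    (bddAbove_setOf_isUniversal w)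

lemma mem_of_one_le_univIndex [Fintype α] {w : List α} (hw : 1 ≤ univIndex w) (a : α) :
    a ∈ w :=
  haveI : Nonempty α := ⟨a⟩
  (isUniversal_univIndex w _ (List.length_replicate ..)).subset
    (List.mem_replicate.mpr ⟨by omega, rfl⟩)

theorem rem_prepend_depends_only_on_alph [Fintype α] [DecidableEq α] (u v w : List α)
    (huv : u.toFinset = v.toFinset) (hne : u.toFinset ≠ Finset.univ)
    (hw : 1 ≤ univIndex w) :
    rem (u ++ w) = rem (v ++ w) := by
  have h_nonempty : {k | u.toFinset ∪ (w.take k).toFinset = Finset.univ}.Nonempty :=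
    ⟨w.length, Finset.eq_univ_of_forall fun a => by simp [mem_of_one_le_univIndex hw a]⟩
  obtain ⟨p, hp⟩ : ∃ p, IsLeast {k | u.toFinset ∪ (w.take k).toFinset = Finset.univ} p :=
    ⟨_, isLeast_csInf h_nonempty⟩
  rw [rem_append_eq_rem_drop hne hp, rem_append_eq_rem_drop (huv ▸ hne) (huv ▸ hp)]
end
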